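/- arXiv:2112.13738 — 2 statements merged into one kernel-verified Lean document; each statement's English description precedes it below -/
import Mathlib

section
/- Suppose H = f(X) + N where N ≥ 0 is independent of X, N has a regularly varying tail, G = ḡ(X) ≥ 0 is tail-equivalent to H (i.e. P(G>u)/P(H>u) converges to a constant in (0,∞)), and P(f(X) > u) = o(P(N > u)) as u → ∞. Then lim_{u→∞} P(G > u | H > u) = 0, and consequently the limiting extremal risk R(ḡ) = lim_{u→∞} P({G>u} △ {H>u})/P({G>u} ∪ {H>u}) equals 1. -/
/-!
On `{G > u, H > u}` either `f(X) > δu` or `N > (1 - δ)u`. Regular variation of the tail of `N`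
turns `P(f(X) > δu) = o(P(N > δu))` into `o(P(N > u))`, which is `o(P(H > u))` because `H ≥ N`.
By independence, `P(G > u, N > (1 - δ)u) = P(G > u) P(N > (1 - δ)u)`, and tail equivalence makes
this `O(P(H > u)) · o(1)`. Hence `P(G > u, H > u) = o(P(H > u))`, and then both
`P({G > u} ∆ {H > u})` and `P({G > u} ∪ {H > u})` are asymptotic to `(c + 1) P(H > u)`.
-/

open MeasureTheory Set Filter Topology ProbabilityTheory
open scoped symmDiff

theorem tendsto_comp_mul_div_of_tendsto_div {F T : ℝ → ℝ} {δ L : ℝ} (hδ : 0 < δ)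
    (hT : ∀ u, T u ≠ 0) (hFT : Tendsto (fun u => F u / T u) atTop (𝓝 0))
    (hTδ : Tendsto (fun u => T (δ * u) / T u) atTop (𝓝 L)) :
    Tendsto (fun u => F (δ * u) / T u) atTop (𝓝 0) := by
  have h := (hFT.comp (tendsto_id.const_mul_atTop hδ)).mul hTδ
  rw [zero_mul] at h
  refine h.congr fun u => ?_
  simp only [Function.comp_apply, id_eq]
  rw [div_mul_div_cancel₀ (hT _)]

namespace MeasureTheory

variable {Ω : Type*} [MeasurableSpace Ω] {μ : Measure Ω} [IsFiniteMeasure μ]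

theorem tendsto_measureReal_setOf_lt_atTop {Y : Ω → ℝ} (hY : Measurable Y) :
    Tendsto (fun u : ℝ => μ.real {ω | u < Y ω}) atTop (𝓝 0) := by
  have hlim : Tendsto (fun u : ℝ => μ {ω | u < Y ω}) atTop (𝓝 (μ (⋂ u : ℝ, {ω | u < Y ω}))) :=
    tendsto_measure_iInter_atTop (fun u => (measurableSet_lt measurable_const hY).nullMeasurableSet)
      (fun a b hab ω h => lt_of_le_of_lt hab h) ⟨0, measure_ne_top _ _⟩
  have hempty : (⋂ u : ℝ, {ω | u < Y ω}) = ∅ :=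
    eq_empty_of_forall_notMem fun ω h => (lt_irrefl (Y ω)) (mem_iInter.1 h (Y ω))
  rw [hempty, measure_empty] at hlim
  exact (ENNReal.tendsto_toReal ENNReal.zero_ne_top).comp hlim

theorem measureReal_symmDiff_eq_add_sub_inter {s t : Set Ω} (hs : MeasurableSet s)
    (ht : MeasurableSet t) :
    μ.real (s ∆ t) = μ.real s + μ.real t - 2 * μ.real (s ∩ t) := by
  have hst := measureReal_sdiff_add_inter (μ := μ) (s := s) ht
  have hts := measureReal_sdiff_add_inter (μ := μ) (s := t) hs
  rw [inter_comm] at hts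
  rw [measureReal_symmDiff_eq hs ht]
  linarith

theorem measureReal_union_eq_add_sub_inter {s t : Set Ω} (ht : MeasurableSet t) :
    μ.real (s ∪ t) = μ.real s + μ.real t - μ.real (s ∩ t) := by
  linarith [measureReal_union_add_inter (μ := μ) (s := s) ht]

theorem tendsto_measureReal_symmDiff_div_union {ι : Type*} {l : Filter ι}
    {A B : ι → Set Ω} {c : ℝ} (hA : ∀ i, MeasurableSet (A i)) (hB : ∀ i, MeasurableSet (B i))
    (hBpos : ∀ i, 0 < μ.real (B i)) (hc : 0 ≤ c)
    (hAB : Tendsto (fun i => μ.real (A i) / μ.real (B i)) l (𝓝 c))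
    (hinter : Tendsto (fun i => μ.real (A i ∩ B i) / μ.real (B i)) l (𝓝 0)) :
    Tendsto (fun i => μ.real (A i ∆ B i) / μ.real (A i ∪ B i)) l (𝓝 1) := by
  have hsymm := (hAB.add_const 1).sub (hinter.const_mul 2)
  have hunion := (hAB.add_const 1).sub hinter
  have hc1 : c + 1 - 0 ≠ 0 := by linarith
  have h := hsymm.div hunion hc1
  rw [mul_zero, div_self hc1] at h
  refine h.congr fun i => ?_
  have hB0 := (hBpos i).ne'
  simp only [Pi.div_apply]
  rw [measureReal_symmDiff_eq_add_sub_inter (hA i) (hB i),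
    measureReal_union_eq_add_sub_inter (hB i)]
  field_simp

theorem measureReal_inter_setOf_lt_add_le_of_indepFun {G F N : Ω → ℝ} (hGN : IndepFun G N μ)
    (u δ : ℝ) :
    μ.real ({ω | u < G ω} ∩ {ω | u < F ω + N ω}) ≤
      μ.real {ω | δ * u < F ω} + μ.real {ω | u < G ω} * μ.real {ω | (1 - δ) * u < N ω} := by
  have hsplit : {ω | u < G ω} ∩ {ω | u < F ω + N ω} ⊆
      {ω | δ * u < F ω} ∪ ({ω | u < G ω} ∩ {ω | (1 - δ) * u < N ω}) := by
    rintro ω ⟨hG, hH⟩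
    by_cases hF : δ * u < F ω
    · exact Or.inl hF
    · exact Or.inr ⟨hG, by simp only [mem_ofPred_eq] at hH ⊢; linarith⟩
  have hindep : μ.real ({ω | u < G ω} ∩ {ω | (1 - δ) * u < N ω}) =
      μ.real {ω | u < G ω} * μ.real {ω | (1 - δ) * u < N ω} := by
    simp only [measureReal_def, ← ENNReal.toReal_mul]
    exact congrArg ENNReal.toReal (hGN.measure_inter_preimage_eq_mul _ _
      measurableSet_Ioi measurableSet_Ioi)
  calc _ ≤ μ.real ({ω | δ * u < F ω} ∪ ({ω | u < G ω} ∩ {ω | (1 - δ) * u < N ω})) :=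
        measureReal_mono hsplit
    _ ≤ _ := hindep ▸ measureReal_union_le _ _

theorem measureReal_setOf_lt_le_setOf_lt_add {F N : Ω → ℝ} (hF0 : ∀ ω, 0 ≤ F ω) (u : ℝ) :
    μ.real {ω | u < N ω} ≤ μ.real {ω | u < F ω + N ω} :=
  measureReal_mono fun ω (h : u < N ω) => show u < F ω + N ω by linarith [hF0 ω]

theorem tendsto_measureReal_inter_setOf_lt_add_div {G F N : Ω → ℝ} {δ L c : ℝ}
    (hN : Measurable N) (hF0 : ∀ ω, 0 ≤ F ω) (hGN : IndepFun G N μ) (hδ0 : 0 < δ) (hδ1 : δ < 1)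
    (hNpos : ∀ u, 0 < μ.real {ω | u < N ω})
    (hNδ : Tendsto (fun u => μ.real {ω | δ * u < N ω} / μ.real {ω | u < N ω}) atTop (𝓝 L))
    (hFN : Tendsto (fun u => μ.real {ω | u < F ω} / μ.real {ω | u < N ω}) atTop (𝓝 0))
    (hGH : Tendsto (fun u => μ.real {ω | u < G ω} / μ.real {ω | u < F ω + N ω}) atTop (𝓝 c)) :
    Tendsto (fun u => μ.real ({ω | u < G ω} ∩ {ω | u < F ω + N ω}) /
      μ.real {ω | u < F ω + N ω}) atTop (𝓝 0) := by
  have hNH := measureReal_setOf_lt_le_setOf_lt_add (μ := μ) (N := N) hF0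
  have hHpos : ∀ u, 0 < μ.real {ω | u < F ω + N ω} := fun u => (hNpos u).trans_le (hNH u)
  have hFH : Tendsto (fun u => μ.real {ω | δ * u < F ω} / μ.real {ω | u < F ω + N ω})
      atTop (𝓝 0) :=
    squeeze_zero (fun u => by positivity)
      (fun u => div_le_div_of_nonneg_left measureReal_nonneg (hNpos u) (hNH u))
      (tendsto_comp_mul_div_of_tendsto_div hδ0 (fun u => (hNpos u).ne') hFN hNδ)
  have hGNδ : Tendsto (fun u => μ.real {ω | u < G ω} / μ.real {ω | u < F ω + N ω} *
      μ.real {ω | (1 - δ) * u < N ω}) atTop (𝓝 0) := by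
    simpa using hGH.mul ((tendsto_measureReal_setOf_lt_atTop hN).comp
      (tendsto_id.const_mul_atTop (sub_pos.2 hδ1)))
  refine squeeze_zero (fun u => by positivity) (fun u => ?_) (by simpa using hFH.add hGNδ)
  rw [div_mul_eq_mul_div, ← add_div]
  exact div_le_div_of_nonneg_right (measureReal_inter_setOf_lt_add_le_of_indepFun hGN u δ)
    (hHpos u).le

end MeasureTheory

theorem regression_with_heavy_noise_risk_one_general {Ω E : Type*} [MeasurableSpace Ω]
    [MeasurableSpace E] (μ : Measure Ω) [IsProbabilityMeasure μ]
    (X : Ω → E) (f g : E → ℝ) (N : Ω → ℝ)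
    (hX : Measurable X) (hf : Measurable f) (hg : Measurable g) (hN : Measurable N)
    (hf0 : ∀ x, 0 ≤ f x)
    -- N is independent of X
    (hindep : IndepFun X N μ)
    -- N has positive, regularly varying tail
    (hNpos : ∀ u : ℝ, 0 < (μ {ω | u < N ω}).toReal)
    (hNrv : ∃ α : ℝ, 0 < α ∧ ∀ t > (0:ℝ),
      Tendsto (fun u => (μ {ω | t * u < N ω}).toReal / (μ {ω | u < N ω}).toReal)
        atTop (nhds (t ^ (-α))))
    -- P(f(X) > u) = o(P(N > u))
    (hsmall : Tendsto (fun u => (μ {ω | u < f (X ω)}).toReal / (μ {ω | u < N ω}).toReal)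
      atTop (nhds 0))
    -- ḡ(X) is tail-equivalent to H = f(X) + N
    (hequiv : ∃ c : ℝ, 0 < c ∧
      Tendsto (fun u => (μ {ω | u < g (X ω)}).toReal /
          (μ {ω | u < f (X ω) + N ω}).toReal) atTop (nhds c)) :
    Tendsto (fun u =>
        (μ ({ω | u < g (X ω)} ∩ {ω | u < f (X ω) + N ω})).toReal /
          (μ {ω | u < f (X ω) + N ω}).toReal) atTop (nhds 0)
    ∧ Tendsto (fun u =>
        (μ (symmDiff {ω | u < g (X ω)} {ω | u < f (X ω) + N ω})).toReal /
          (μ ({ω | u < g (X ω)} ∪ {ω | u < f (X ω) + N ω})).toReal)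
      atTop (nhds 1) := by
  obtain ⟨α, -, hrv⟩ := hNrv
  obtain ⟨c, hc, hGH⟩ := hequiv
  have hgXN : IndepFun (fun ω => g (X ω)) N μ := hindep.comp hg measurable_id
  have hinter := tendsto_measureReal_inter_setOf_lt_add_div hN (fun ω => hf0 (X ω)) hgXN
    (by norm_num : (0 : ℝ) < 1 / 2) (by norm_num) hNpos (hrv (1 / 2) (by norm_num)) hsmall hGH
  refine ⟨hinter, tendsto_measureReal_symmDiff_div_union (fun u => ?_) (fun u => ?_)
    (fun u => ?_) hc.le hGH hinter⟩
  · exact measurableSet_lt measurable_const (hg.comp hX)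
  · exact measurableSet_lt measurable_const ((hf.comp hX).add hN)
  · exact (hNpos u).trans_le
      (measureReal_setOf_lt_le_setOf_lt_add (fun ω => hf0 (X ω)) u)

theorem regression_with_heavy_noise_risk_one {Ω E : Type*} [MeasurableSpace Ω]
    [MeasurableSpace E] (μ : Measure Ω) [IsProbabilityMeasure μ]
    (X : Ω → E) (f g : E → ℝ) (N : Ω → ℝ)
    (hX : Measurable X) (hf : Measurable f) (hg : Measurable g) (hN : Measurable N)
    (hf0 : ∀ x, 0 ≤ f x) (hg0 : ∀ x, 0 < g x) (hN0 : ∀ ω, 0 ≤ N ω)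
    -- N is independent of X
    (hindep : IndepFun X N μ)
    -- N has positive, regularly varying tail
    (hNpos : ∀ u : ℝ, 0 < (μ {ω | u < N ω}).toReal)
    (hNrv : ∃ α : ℝ, 0 < α ∧ ∀ t > (0:ℝ),
      Tendsto (fun u => (μ {ω | t * u < N ω}).toReal / (μ {ω | u < N ω}).toReal)
        atTop (nhds (t ^ (-α))))
    -- P(f(X) > u) = o(P(N > u))
    (hsmall : Tendsto (fun u => (μ {ω | u < f (X ω)}).toReal / (μ {ω | u < N ω}).toReal)
      atTop (nhds 0))
    -- ḡ(X) is tail-equivalent to H = f(X) + N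
    (hequiv : ∃ c : ℝ, 0 < c ∧
      Tendsto (fun u => (μ {ω | u < g (X ω)}).toReal /
          (μ {ω | u < f (X ω) + N ω}).toReal) atTop (nhds c)) :
    Tendsto (fun u =>
        (μ ({ω | u < g (X ω)} ∩ {ω | u < f (X ω) + N ω})).toReal /
          (μ {ω | u < f (X ω) + N ω}).toReal) atTop (nhds 0)
    ∧ Tendsto (fun u =>
        (μ (symmDiff {ω | u < g (X ω)} {ω | u < f (X ω) + N ω})).toReal /
          (μ ({ω | u < g (X ω)} ∪ {ω | u < f (X ω) + N ω})).toReal)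
      atTop (nhds 1) :=
  regression_with_heavy_noise_risk_one_general μ X f g N hX hf hg hN hf0 hindep hNpos hNrv hsmall
    hequiv
end

section
/- Let (X_j, H_j), j = 1,…,n, be i.i.d. with c_i := lim_{u→∞} P(X_i > u)/P(H > u) existing and finite, and let u_n → ∞ with n P(H > u_n) → ∞. Then ĉ_{n,i} := [Σ_{j=1}^n 1{X_{j,i} > u_n}] / [Σ_{j=1}^n 1{H_j > u_n}] converges in probability to c_i. -/
open MeasureTheory Set Filter Topology ProbabilityTheory

lemma indicator_cheb {Ω : Type*} [MeasurableSpace Ω] (μ : Measure Ω) [IsProbabilityMeasure μ]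
    {E : Type*} [mE : MeasurableSpace E] (Y : ℕ → Ω → E)
    (hmeas : ∀ j, Measurable (Y j))
    (hindep : iIndepFun Y μ)
    (hident : ∀ j, Measure.map (Y j) μ = Measure.map (Y 0) μ)
    {B : Set E} [DecidablePred (· ∈ B)] (hB : MeasurableSet B) (n : ℕ) {ε : ℝ} (hε : 0 < ε) :
    μ {ω | ε ≤ |(∑ j ∈ Finset.range n, if Y j ω ∈ B then (1:ℝ) else 0)
        - n * (μ (Y 0 ⁻¹' B)).toReal|}
      ≤ ENNReal.ofReal ((n * (μ (Y 0 ⁻¹' B)).toReal) / ε ^ 2) := by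
  classical
  set r : ℝ := (μ (Y 0 ⁻¹' B)).toReal with hr
  set Z : ℕ → Ω → ℝ := fun j ω => if Y j ω ∈ B then 1 else 0 with hZ
  have hg : Measurable (fun e : E => if e ∈ B then (1:ℝ) else 0) :=
    Measurable.ite hB measurable_const measurable_const
  have hZmeas : ∀ j, Measurable (Z j) := fun j => hg.comp (hmeas j)
  have hZmem : ∀ j, MemLp (Z j) 2 μ := by
    intro j
    refine MemLp.of_bound (hZmeas j).aestronglyMeasurable 1 ?_
    filter_upwards with ω
    by_cases h : Y j ω ∈ B <;> simp [Z, h]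
  have hμZ : ∀ j, μ (Y j ⁻¹' B) = μ (Y 0 ⁻¹' B) := by
    intro j
    rw [← Measure.map_apply (hmeas j) hB, hident j, Measure.map_apply (hmeas 0) hB]
  have hint : ∀ j, μ[Z j] = r := by
    intro j
    have h1 : Z j = (Y j ⁻¹' B).indicator (fun _ => (1:ℝ)) := by
      ext ω; simp [Z, Set.indicator_apply, Set.mem_preimage]
    rw [h1]
    have := integral_indicator_one (μ := μ) ((hmeas j) hB)
    exact this.trans (by rw [measureReal_def, hμZ j])
  have hvar : ∀ j, variance (Z j) μ ≤ r := by
    intro j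
    have h2 : (Z j ^ 2 : Ω → ℝ) = Z j := by
      ext ω; by_cases h : Y j ω ∈ B <;> simp [Z, h]
    rw [variance_eq_sub (hZmem j), h2, hint j]
    nlinarith [sq_nonneg r]
  have hindZ : Set.Pairwise ↑(Finset.range n) (fun j k => IndepFun (Z j) (Z k) μ) := by
    intro j _ k _ hjk
    exact (hindep.comp (fun _ => fun e => if e ∈ B then (1:ℝ) else 0) (fun _ => hg)).indepFun hjk
  have hsum_mem : MemLp (∑ j ∈ Finset.range n, Z j) 2 μ :=
    memLp_finset_sum' _ (fun j _ => hZmem j)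
  have hvar_sum : variance (∑ j ∈ Finset.range n, Z j) μ ≤ n * r := by
    rw [IndepFun.variance_sum (fun j _ => hZmem j) hindZ]
    refine le_trans (Finset.sum_le_sum fun j _ => hvar j) ?_
    simp [Finset.sum_const, nsmul_eq_mul]
  have hmean : μ[∑ j ∈ Finset.range n, Z j] = n * r := by
    have hi : ∀ j ∈ Finset.range n, Integrable (Z j) μ :=
      fun j _ => (hZmem j).integrable one_le_two
    simp only [Finset.sum_apply]
    rw [integral_finset_sum _ hi]
    simp [hint, Finset.sum_const, nsmul_eq_mul]
  have hset : {ω | ε ≤ |(∑ j ∈ Finset.range n, if Y j ω ∈ B then (1:ℝ) else 0) - n * r|}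
      = {ω | ε ≤ |(∑ j ∈ Finset.range n, Z j) ω - μ[∑ j ∈ Finset.range n, Z j]|} := by
    have hZs : ∀ ω, (∑ j ∈ Finset.range n, if Y j ω ∈ B then (1:ℝ) else 0)
        = (∑ j ∈ Finset.range n, Z j) ω := fun ω => by simp [Z, Finset.sum_apply]
    ext ω
    simp only [Set.mem_setOf_eq]
    rw [hmean, hZs ω]
  rw [hset]
  refine le_trans (meas_ge_le_variance_div_sq hsum_mem hε) (ENNReal.ofReal_le_ofReal ?_)
  gcongr

theorem empirical_tail_ratio_consistent {Ω : Type*} [MeasurableSpace Ω]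
    (μ : Measure Ω) [IsProbabilityMeasure μ]
    {d : ℕ} (X : ℕ → Ω → Fin d → ℝ) (H : ℕ → Ω → ℝ) (i : Fin d)
    -- the samples (Xⱼ, Hⱼ) are i.i.d.
    (hmeas : ∀ j, Measurable (fun ω => (X j ω, H j ω)))
    (hindep : iIndepFun
      (fun j ω => (X j ω, H j ω)) μ)
    (hident : ∀ j, Measure.map (fun ω => (X j ω, H j ω)) μ
      = Measure.map (fun ω => (X 0 ω, H 0 ω)) μ)
    (hHpos : ∀ u : ℝ, 0 < (μ {ω | u < H 0 ω}).toReal)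
    (c : ℝ)
    -- cᵢ = lim P(Xᵢ > u)/P(H > u) exists
    (hc : Tendsto (fun u => (μ {ω | u < X 0 ω i}).toReal / (μ {ω | u < H 0 ω}).toReal)
      atTop (nhds c))
    (u : ℕ → ℝ) (hu : Tendsto u atTop atTop)
    (hnp : Tendsto (fun n : ℕ => (n : ℝ) * (μ {ω | u n < H 0 ω}).toReal) atTop atTop) :
    -- the empirical ratio converges in probability to cᵢ
    ∀ δ > (0:ℝ), Tendsto (fun n : ℕ =>
        (μ {ω | δ < |(∑ j ∈ Finset.range n, if u n < X j ω i then (1:ℝ) else 0) /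
              (∑ j ∈ Finset.range n, if u n < H j ω then (1:ℝ) else 0) - c|}).toReal)
      atTop (nhds 0) := by
  intro δ hδ
  set Y : ℕ → Ω → (Fin d → ℝ) × ℝ := fun j ω => (X j ω, H j ω) with hY
  set q : ℕ → ℝ := fun n => (μ {ω | u n < H 0 ω}).toReal with hq
  set p : ℕ → ℝ := fun n => (μ {ω | u n < X 0 ω i}).toReal with hp
  have hqpos : ∀ n, 0 < q n := fun n => hHpos (u n)
  set ε : ℝ := min (1/2) (δ / (4 * (1 + |c|))) with hε
  have hεpos : 0 < ε := lt_min (by norm_num) (div_pos hδ (by positivity))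
  have hεhalf : ε ≤ 1/2 := min_le_left _ _
  have hεc : ε * (1 + |c|) ≤ δ / 4 := by
    have h1 : ε ≤ δ / (4 * (1 + |c|)) := min_le_right _ _
    have h2 : (0:ℝ) < 1 + |c| := by positivity
    rw [le_div_iff₀ (by positivity)] at h1
    nlinarith [abs_nonneg c]
  have hratio : Tendsto (fun n => p n / q n) atTop (𝓝 c) := hc.comp hu
  -- the deterministic bound
  set g : ℕ → ℝ := fun n => (p n / q n) * (1 / (ε ^ 2 * ((n : ℝ) * q n)))
      + 1 / (ε ^ 2 * ((n : ℝ) * q n)) with hg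
  have hA : Tendsto (fun n : ℕ => ε ^ 2 * ((n : ℝ) * q n)) atTop atTop :=
    hnp.const_mul_atTop (by positivity)
  have hinv : Tendsto (fun n : ℕ => 1 / (ε ^ 2 * ((n : ℝ) * q n))) atTop (𝓝 0) := by
    simp only [one_div]
    exact hA.inv_tendsto_atTop
  have hg0 : Tendsto g atTop (𝓝 0) := by
    have h1 : Tendsto (fun n => (p n / q n) * (1 / (ε ^ 2 * ((n : ℝ) * q n)))) atTop
        (𝓝 (c * 0)) := hratio.mul hinv
    have h2 := h1.add hinv
    rw [show c * 0 + 0 = (0:ℝ) by ring] at h2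
    exact h2
  -- squeeze
  refine squeeze_zero' (Eventually.of_forall fun n => ENNReal.toReal_nonneg) ?_ hg0
  have hev1 : ∀ᶠ n : ℕ in atTop, |p n / q n - c| < δ / 4 := by
    have := Metric.tendsto_nhds.mp hratio (δ / 4) (by positivity)
    simpa [Real.dist_eq] using this
  filter_upwards [hev1, eventually_ge_atTop 1] with n hpq hn1
  -- notation
  have hnR : (1:ℝ) ≤ (n : ℝ) := by exact_mod_cast hn1
  have hn0 : (0:ℝ) < (n : ℝ) := by linarith
  have hN : 0 < (n : ℝ) * q n := mul_pos hn0 (hqpos n)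
  have hεN : 0 < ε * ((n : ℝ) * q n) := mul_pos hεpos hN
  set B1 : Set ((Fin d → ℝ) × ℝ) := {pr | u n < pr.1 i} with hB1
  set B2 : Set ((Fin d → ℝ) × ℝ) := {pr | u n < pr.2} with hB2
  have hB1m : MeasurableSet B1 :=
    measurableSet_lt measurable_const measurable_fst.eval
  have hB2m : MeasurableSet B2 := measurableSet_lt measurable_const measurable_snd
  letI hd1 : DecidablePred (· ∈ B1) := fun pr => Real.decidableLT (u n) (pr.1 i)
  letI hd2 : DecidablePred (· ∈ B2) := fun pr => Real.decidableLT (u n) pr.2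
  have hc1 := indicator_cheb μ Y hmeas hindep hident hB1m n hεN
  have hc2 := indicator_cheb μ Y hmeas hindep hident hB2m n hεN
  have hpre1 : (μ (Y 0 ⁻¹' B1)).toReal = p n := rfl
  have hpre2 : (μ (Y 0 ⁻¹' B2)).toReal = q n := rfl
  rw [hpre1] at hc1
  rw [hpre2] at hc2
  set Bad1 : Set Ω := {ω | ε * ((n : ℝ) * q n)
      ≤ |(∑ j ∈ Finset.range n, if u n < X j ω i then (1:ℝ) else 0) - n * p n|} with hBad1
  set Bad2 : Set Ω := {ω | ε * ((n : ℝ) * q n)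
      ≤ |(∑ j ∈ Finset.range n, if u n < H j ω then (1:ℝ) else 0) - n * q n|} with hBad2
  have hc1' : μ Bad1 ≤ ENNReal.ofReal ((n * p n) / (ε * ((n : ℝ) * q n)) ^ 2) := hc1
  have hc2' : μ Bad2 ≤ ENNReal.ofReal ((n * q n) / (ε * ((n : ℝ) * q n)) ^ 2) := hc2
  -- inclusion
  have hsub : {ω | δ < |(∑ j ∈ Finset.range n, if u n < X j ω i then (1:ℝ) else 0) /
      (∑ j ∈ Finset.range n, if u n < H j ω then (1:ℝ) else 0) - c|} ⊆ Bad1 ∪ Bad2 := by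
    intro ω hω
    by_contra hcon
    simp only [Bad1, Bad2, Set.mem_union, Set.mem_setOf_eq, not_or, not_le] at hcon
    obtain ⟨h1, h2⟩ := hcon
    set S : ℝ := ∑ j ∈ Finset.range n, if u n < X j ω i then (1:ℝ) else 0 with hS
    set T : ℝ := ∑ j ∈ Finset.range n, if u n < H j ω then (1:ℝ) else 0 with hT
    set N : ℝ := (n : ℝ) * q n with hNdef
    have hT2 : N / 2 ≤ T := by
      have := abs_lt.mp h2
      nlinarith
    have hT0 : 0 < T := by nlinarith
    have hnp' : (n : ℝ) * p n = N * (p n / q n) := by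
      field_simp [hNdef, (hqpos n).ne']
      ring
    have hkey : |S - c * T| ≤ N * (δ / 2) := by
      have e1 : S - c * T = (S - n * p n) + ((n : ℝ) * p n - c * N) + (c * N - c * T) := by ring
      have e2 : |(n : ℝ) * p n - c * N| ≤ N * (δ / 4) := by
        rw [hnp']
        have : N * (p n / q n) - c * N = N * (p n / q n - c) := by ring
        rw [this, abs_mul, abs_of_pos hN]
        exact mul_le_mul_of_nonneg_left hpq.le hN.le
      have e3 : |c * N - c * T| ≤ |c| * (ε * N) := by
        have : c * N - c * T = c * (N - T) := by ring
        rw [this, abs_mul]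
        exact mul_le_mul_of_nonneg_left (by rw [abs_sub_comm]; exact h2.le) (abs_nonneg c)
      calc |S - c * T| ≤ |S - n * p n| + |(n : ℝ) * p n - c * N| + |c * N - c * T| := by
            rw [e1]; exact (abs_add_le _ _).trans (add_le_add_left (abs_add_le _ _) _)
        _ ≤ ε * N + N * (δ / 4) + |c| * (ε * N) := add_le_add (add_le_add h1.le e2) e3
        _ = N * (ε * (1 + |c|) + δ / 4) := by ring
        _ ≤ N * (δ / 4 + δ / 4) := by
            exact mul_le_mul_of_nonneg_left (add_le_add_left hεc _) hN.le
        _ = N * (δ / 2) := by ring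
    have habs : |S / T - c| = |S - c * T| / T := by
      have e : S / T - c = (S - c * T) / T := by field_simp
      rw [e, abs_div, abs_of_pos hT0]
    have hfin : |S / T - c| ≤ δ := by
      rw [habs, div_le_iff₀ hT0]
      nlinarith [hkey, mul_le_mul_of_nonneg_left hT2 hδ.le]
    exact absurd hω (not_lt.mpr hfin)
  -- combine
  have hμle : μ {ω | δ < |(∑ j ∈ Finset.range n, if u n < X j ω i then (1:ℝ) else 0) /
      (∑ j ∈ Finset.range n, if u n < H j ω then (1:ℝ) else 0) - c|} ≤ μ Bad1 + μ Bad2 :=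
    (measure_mono hsub).trans (measure_union_le _ _)
  have ht1 : (μ Bad1).toReal ≤ (n * p n) / (ε * ((n : ℝ) * q n)) ^ 2 :=
    ENNReal.toReal_le_of_le_ofReal (by positivity) hc1'
  have ht2 : (μ Bad2).toReal ≤ (n * q n) / (ε * ((n : ℝ) * q n)) ^ 2 :=
    ENNReal.toReal_le_of_le_ofReal (by positivity) hc2'
  have heq1 : (n * p n) / (ε * ((n : ℝ) * q n)) ^ 2
      = (p n / q n) * (1 / (ε ^ 2 * ((n : ℝ) * q n))) := by
    rw [mul_one_div, div_div, div_eq_div_iff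
      (pow_ne_zero 2 (mul_ne_zero hεpos.ne' hN.ne'))
      (mul_ne_zero (hqpos n).ne' (mul_ne_zero (pow_ne_zero 2 hεpos.ne') hN.ne'))]
    ring
  have heq2 : ((n : ℝ) * q n) / (ε * ((n : ℝ) * q n)) ^ 2 = 1 / (ε ^ 2 * ((n : ℝ) * q n)) := by
    rw [div_eq_div_iff
      (pow_ne_zero 2 (mul_ne_zero hεpos.ne' hN.ne'))
      (mul_ne_zero (pow_ne_zero 2 hεpos.ne') hN.ne')]
    ring
  calc (μ {ω | δ < |(∑ j ∈ Finset.range n, if u n < X j ω i then (1:ℝ) else 0) /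
          (∑ j ∈ Finset.range n, if u n < H j ω then (1:ℝ) else 0) - c|}).toReal
      ≤ (μ Bad1 + μ Bad2).toReal := ENNReal.toReal_mono
        (by finiteness) hμle
    _ = (μ Bad1).toReal + (μ Bad2).toReal := ENNReal.toReal_add (measure_ne_top _ _)
        (measure_ne_top _ _)
    _ ≤ g n := by
        show (μ Bad1).toReal + (μ Bad2).toReal
          ≤ (p n / q n) * (1 / (ε ^ 2 * ((n : ℝ) * q n))) + 1 / (ε ^ 2 * ((n : ℝ) * q n))
        rw [← heq1, ← heq2]
        exact add_le_add ht1 ht2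
end
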